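/- There exists an absolute constant C > 0 such that for every f in the Zygmund class Λ_*, every x ∈ ℝ and all h′ > h > 0, one has |Δ₂f(x,h′) − Δ₂f(x,h)| ≤ C ‖f‖_* ((h′−h)/h′)(1 + log(h′/(h′−h))). -/

import Mathlib

noncomputable section
open MeasureTheory
open scoped ENNReal NNReal

/-- Second divided difference `Δ₂f(x,h) = (f(x+h) - 2f(x) + f(x-h))/h`. -/
def delta2 (f : ℝ → ℝ) (x h : ℝ) : ℝ := (f (x + h) - 2 * f x + f (x - h)) / h

/-- `M` is a bound for the Zygmund seminorm of `f`. -/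
def ZygBound (f : ℝ → ℝ) (M : ℝ) : Prop := ∀ x h : ℝ, 0 < h → |delta2 f x h| ≤ M

/-- `f` belongs to the Zygmund class `Λ_*`. -/
def MemZygmund (f : ℝ → ℝ) : Prop := Continuous f ∧ ∃ M, ZygBound f M

/-- The Zygmund seminorm `‖f‖_* = sup_{x, h>0} |Δ₂f(x,h)|`. -/
def zygNorm (f : ℝ → ℝ) : ℝ := sInf {M | 0 ≤ M ∧ ZygBound f M}

/-- Average of `g` over the interval `(a,b)`. -/
def intervalAvg (g : ℝ → ℝ) (a b : ℝ) : ℝ := (b - a)⁻¹ * ∫ t in a..b, g t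

/-- `M` bounds the mean oscillation of `g` over all finite intervals. -/
def BMOBound (g : ℝ → ℝ) (M : ℝ) : Prop := ∀ a b : ℝ, a < b →
  (∫⁻ x in Set.Ioo a b, ENNReal.ofReal ((g x - intervalAvg g a b)^2))
    ≤ ENNReal.ofReal (M^2 * (b - a))

/-- `g` has bounded mean oscillation. -/
def MemBMO (g : ℝ → ℝ) : Prop := LocallyIntegrable g volume ∧ ∃ M, BMOBound g M

/-- `f ∈ I(BMO)`: `f` is continuous and its distributional derivative is a BMO
function, i.e. `f` is a primitive of a BMO function. -/
def MemIBMO (f : ℝ → ℝ) : Prop := Continuous f ∧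
  ∃ g : ℝ → ℝ, MemBMO g ∧ ∀ x, f x = f 0 + ∫ t in (0:ℝ)..x, g t

/-- The set `A(f,ε) = {(x,h) : h > 0, |Δ₂f(x,h)| > ε}` in the upper half-plane. -/
def Aset (f : ℝ → ℝ) (ε : ℝ) : Set (ℝ × ℝ) := {p | 0 < p.2 ∧ ε < |delta2 f p.1 p.2|}

/-- `∫_I ∫_0^{|I|} χ_{A(f,ε)}(x,h) dh dx / h` for the interval `I = (a,b)`. -/
def Cquant (f : ℝ → ℝ) (ε a b : ℝ) : ℝ≥0∞ :=
  ∫⁻ x in Set.Ioo a b, ∫⁻ h in Set.Ioo 0 (b - a),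
    (Aset f ε).indicator (fun _ => (1:ℝ≥0∞)) (x, h) / ENNReal.ofReal h

/-- `C(f,ε) = sup_I (1/|I|) ∫_I ∫_0^{|I|} χ_{A(f,ε)} dh dx/h < ∞`. -/
def CFinite (f : ℝ → ℝ) (ε : ℝ) : Prop :=
  ∃ K : ℝ, ∀ a b : ℝ, a < b → Cquant f ε a b ≤ ENNReal.ofReal (K * (b - a))

/-- `dist(f, I(BMO)) = inf {‖f - g‖_* : g ∈ I(BMO)}`. -/
def distIBMO (f : ℝ → ℝ) : ℝ :=
  sInf {r | ∃ g, MemIBMO g ∧ r = zygNorm (fun x => f x - g x)}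

/-!
Put `g u = f (x + u) - 2 f x + f (x - u)`, so that `Δ₂f(x,h) = g h / h`, `|g u| ≤ ‖f‖_* u`, and
`g` is itself a Zygmund function with constant `2‖f‖_*`. For a Zygmund function the increment over
`[t, t + v]` is half the increment over `[t, t + 2v]` up to an error `O(v)`. Starting from
`[h, h']` and doubling `n ≈ log₂ (h' / (h' - h))` times reaches an interval of length `≥ h`, where
the crude bound on `|g|` applies; this gives
`|g h' - g h| ≲ ‖f‖_* (h' - h) (1 + log (h' / (h' - h)))`, and dividing by `h'` gives the estimate.
-/

def secondDiff (f : ℝ → ℝ) (x u : ℝ) : ℝ := f (x + u) - 2 * f x + f (x - u)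

theorem delta2_secondDiff (f : ℝ → ℝ) (x t v : ℝ) :
    delta2 (secondDiff f x) t v = delta2 f (x + t) v + delta2 f (x - t) v := by
  simp only [delta2, secondDiff, ← add_div]
  ring_nf

theorem zygBound_zygNorm {f : ℝ → ℝ} (hf : ∃ M, ZygBound f M) : ZygBound f (zygNorm f) := by
  obtain ⟨M, hM⟩ := hf
  have hmem : max M 0 ∈ {K | 0 ≤ K ∧ ZygBound f K} :=
    ⟨le_max_right _ _, fun x h hh => (hM x h hh).trans (le_max_left _ _)⟩
  exact fun x h hh => le_csInf ⟨_, hmem⟩ fun K hK => hK.2 x h hh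

theorem exists_le_two_pow_of_one_le {y : ℝ} (hy : 1 ≤ y) :
    ∃ n : ℕ, y ≤ 2 ^ n ∧ (n : ℝ) ≤ 1 + 2 * Real.log y := by
  have hlog : 0 ≤ Real.logb 2 y := Real.logb_nonneg one_lt_two hy
  refine ⟨⌈Real.logb 2 y⌉₊, ?_, ?_⟩
  · rw [← Real.rpow_natCast, ← Real.logb_le_iff_le_rpow one_lt_two (by linarith)]
    exact Nat.le_ceil _
  · have hceil := Nat.ceil_lt_add_one hlog
    have hlog2 : 1 / 2 < Real.log 2 := by linarith [Real.log_two_gt_d9]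
    have : Real.logb 2 y ≤ 2 * Real.log y := by
      rw [Real.logb, div_le_iff₀ (by linarith)]
      nlinarith [Real.log_nonneg hy]
    linarith

theorem zygBound_secondDiff {f : ℝ → ℝ} {M : ℝ} (hf : ZygBound f M) (x : ℝ) :
    ZygBound (secondDiff f x) (2 * M) := by
  intro t v hv
  rw [delta2_secondDiff, two_mul]
  exact (abs_add_le _ _).trans (add_le_add (hf _ v hv) (hf _ v hv))

namespace ZygBound

variable {f g : ℝ → ℝ} {K M : ℝ}

theorem nonneg (hf : ZygBound f M) : 0 ≤ M :=
  (abs_nonneg _).trans (hf 0 1 one_pos)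

theorem abs_secondDiff_le (hf : ZygBound f M) (x : ℝ) {h : ℝ} (hh : 0 < h) :
    |secondDiff f x h| ≤ M * h := by
  have := hf x h hh
  rwa [delta2, abs_div, abs_of_pos hh, div_le_iff₀ hh] at this

theorem two_mul_abs_sub_le (hg : ZygBound g K) (t : ℝ) {v : ℝ} (hv : 0 < v) :
    2 * |g (t + v) - g t| ≤ |g (t + 2 * v) - g t| + K * v := by
  have hsd := hg.abs_secondDiff_le (t + v) hv
  rw [secondDiff, show t + v + v = t + 2 * v by ring, add_sub_cancel_right] at hsd
  have := abs_sub_abs_le_abs_sub (2 * (g (t + v) - g t)) (g (t + 2 * v) - g t)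
  rw [abs_mul, abs_two, abs_sub_comm (2 * _), show g (t + 2 * v) - g t - 2 * (g (t + v) - g t)
    = g (t + 2 * v) - 2 * g (t + v) + g t by ring] at this
  linarith

theorem abs_sub_le_two_pow (hg : ZygBound g K) (t : ℝ) (n : ℕ) {v : ℝ} (hv : 0 < v) :
    |g (t + v) - g t| ≤ |g (t + 2 ^ n * v) - g t| / 2 ^ n + n * (K * v) / 2 := by
  induction n generalizing v with
  | zero => simp
  | succ n ih =>
    have step := hg.two_mul_abs_sub_le t hv
    have := ih (mul_pos two_pos hv)
    rw [show (2 : ℝ) ^ (n + 1) * v = 2 ^ n * (2 * v) by ring, pow_succ, ← div_div]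
    push_cast
    linarith

theorem abs_sub_le_of_le_two_pow (hg : ZygBound g K) {L : ℝ}
    (hL : ∀ u, 0 < u → |g u| ≤ L * u) {t d : ℝ} (ht : 0 < t) (hd : 0 < d) {n : ℕ}
    (htn : t ≤ 2 ^ n * d) : |g (t + d) - g t| ≤ (3 * L + n * K / 2) * d := by
  have hL0 : 0 ≤ L := by simpa using (abs_nonneg _).trans (hL 1 one_pos)
  have hpow : (0 : ℝ) < 2 ^ n := by positivity
  have far : |g (t + 2 ^ n * d) - g t| ≤ 3 * L * (2 ^ n * d) := by
    calc |g (t + 2 ^ n * d) - g t| ≤ |g (t + 2 ^ n * d)| + |g t| := abs_sub _ _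
      _ ≤ L * (t + 2 ^ n * d) + L * t := add_le_add (hL _ (by positivity)) (hL t ht)
      _ ≤ 3 * L * (2 ^ n * d) := by nlinarith
  have := hg.abs_sub_le_two_pow t n hd
  rw [show 3 * L * (2 ^ n * d) = 3 * L * d * 2 ^ n by ring, ← div_le_iff₀ hpow] at far
  linarith

theorem abs_secondDiff_sub_le (hf : ZygBound f M) (x : ℝ) {h h' : ℝ} (hh : 0 < h)
    (hhh' : h < h') : |secondDiff f x h' - secondDiff f x h|
      ≤ M * (h' - h) * (4 + 2 * Real.log (h' / (h' - h))) := by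
  have hd : 0 < h' - h := sub_pos.2 hhh'
  obtain ⟨n, hn, hn_log⟩ := exists_le_two_pow_of_one_le
    ((one_le_div hd).2 (sub_le_self h' hh.le))
  have hhn : h ≤ 2 ^ n * (h' - h) := hhh'.le.trans ((div_le_iff₀ hd).1 hn)
  have := (zygBound_secondDiff hf x).abs_sub_le_of_le_two_pow
    (fun u hu => hf.abs_secondDiff_le x hu) hh hd hhn
  rw [add_sub_cancel] at this
  nlinarith [mul_le_mul_of_nonneg_left hn_log (mul_nonneg hf.nonneg hd.le)]

theorem abs_delta2_sub_le (hf : ZygBound f M) (x : ℝ) {h h' : ℝ} (hh : 0 < h)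
    (hhh' : h < h') : |delta2 f x h' - delta2 f x h|
      ≤ 5 * M * ((h' - h) / h' * (1 + Real.log (h' / (h' - h)))) := by
  have hh' : 0 < h' := hh.trans hhh'
  have hd : 0 < (h' - h) / h' := div_pos (sub_pos.2 hhh') hh'
  have hlog : 0 ≤ Real.log (h' / (h' - h)) :=
    Real.log_nonneg ((one_le_div (sub_pos.2 hhh')).2 (sub_le_self h' hh.le))
  have split : delta2 f x h' - delta2 f x h =
      (secondDiff f x h' - secondDiff f x h) / h' - delta2 f x h * ((h' - h) / h') := by
    rw [delta2, delta2]
    field_simp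
    rw [secondDiff, secondDiff]
    ring
  have far : |(secondDiff f x h' - secondDiff f x h) / h'|
      ≤ M * ((h' - h) / h') * (4 + 2 * Real.log (h' / (h' - h))) := by
    rw [abs_div, abs_of_pos hh', div_le_iff₀ hh']
    refine (hf.abs_secondDiff_sub_le x hh hhh').trans_eq ?_
    field_simp
  have near : |delta2 f x h * ((h' - h) / h')| ≤ M * ((h' - h) / h') := by
    rw [abs_mul, abs_of_pos hd]
    exact mul_le_mul_of_nonneg_right (hf x h hh) hd.le
  rw [split]
  nlinarith [abs_sub ((secondDiff f x h' - secondDiff f x h) / h')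
    (delta2 f x h * ((h' - h) / h')), hf.nonneg, mul_nonneg (mul_nonneg hf.nonneg hd.le) hlog]

end ZygBound

/-- Estimate (2.4): for `h' > h > 0`,
`|Δ₂f(x,h') - Δ₂f(x,h)| ≤ C‖f‖_* ((h'-h)/h')(1 + log(h'/(h'-h)))`. -/
theorem stmt8 : ∃ C > (0:ℝ), ∀ f : ℝ → ℝ, MemZygmund f →
    ∀ x h h' : ℝ, 0 < h → h < h' →
    |delta2 f x h' - delta2 f x h| ≤ C * zygNorm f *
      (((h' - h) / h') * (1 + Real.log (h' / (h' - h)))) :=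
  ⟨5, by norm_num, fun _ hf x _ _ hh hhh' =>
    (zygBound_zygNorm hf.2).abs_delta2_sub_le x hh hhh'⟩
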